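/- Let n_1 ≤ … ≤ n_k be positive integers with k ≥ 2 and n_k > 1, let m ≥ 1, let F = mK_{n_1,…,n_k} and ℓ = m(n_1+…+n_k), and let G' = G^m_{ℓ−1,k}. Then for every injection f : V(F) → V(G') realizing F as an induced subgraph of G', there do not exist two vertices v, w of F lying in different connected components of F such that f(v) and f(w) have the same third coordinate (lie in the same part of G') but different second coordinates (lie in different doles of G'). -/

import Mathlib

/-- Disjoint union of `m` copies of a graph `A`. -/
def manyCopies {α : Type*} (m : ℕ) (A : SimpleGraph α) : SimpleGraph (Fin m × α) where
  Adj p q := p.1 = q.1 ∧ A.Adj p.2 q.2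
  symm := ⟨by intro p q h; exact ⟨h.1.symm, h.2.symm⟩⟩
  loopless := ⟨by intro p h; exact A.loopless.irrefl _ h.2⟩

/-- The almost multipartite graph `G^m_{ℓ,k}`, on triples `(i, j, h)` where `i` is the
class, `j` the dole and `h` the part: two vertices are adjacent iff they are in the same
part with different classes and doles, or have the same class and different parts. -/
def almostMultipartite (ℓ k m : ℕ) : SimpleGraph (Fin ℓ × Fin k × Fin m) where
  Adj p q := (p.2.2 = q.2.2 ∧ p.1 ≠ q.1 ∧ p.2.1 ≠ q.2.1) ∨ (p.1 = q.1 ∧ p.2.2 ≠ q.2.2)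
  symm := ⟨by
    rintro p q (⟨h1, h2, h3⟩ | ⟨h1, h2⟩)
    · exact Or.inl ⟨h1.symm, h2.symm, h3.symm⟩
    · exact Or.inr ⟨h1.symm, h2.symm⟩⟩
  loopless := ⟨by rintro p (⟨_, h, _⟩ | ⟨_, h⟩) <;> exact h rfl⟩


/-!
If `v`, `w` lie in different components of `F`, they are non-adjacent, so images in one part and
different doles must share their class. A neighbour `u` of `v` is adjacent to `f v` but not to
`f w`; this forces `f u` into the part of `f v`, the dole of `f w` and another class. The same
holds with `v`, `w` swapped, and since neighbours of `v` and of `w` are non-adjacent, all of them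
share one class. Hence every neighbour of `v` has the same image, and every neighbour of a
neighbour of `v` has the image `f v`: the component of `v` is at most an edge. But through every
vertex of `K_{n₁,…,n_k}` with `k ≥ 2` and some `nᵢ ≥ 2` passes a path on three vertices.
-/

namespace almostMultipartite

variable {ℓ k m : ℕ} {p q : Fin ℓ × Fin k × Fin m}

theorem class_eq_of_not_adj (h : ¬(almostMultipartite ℓ k m).Adj p q) (hpart : p.2.2 = q.2.2)
    (hdole : p.2.1 ≠ q.2.1) : p.1 = q.1 := by
  by_contra hclass
  exact h (Or.inl ⟨hpart, hclass, hdole⟩)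

theorem dole_eq_of_not_adj (h : ¬(almostMultipartite ℓ k m).Adj p q) (hpart : p.2.2 = q.2.2)
    (hclass : p.1 ≠ q.1) : p.2.1 = q.2.1 := by
  by_contra hdole
  exact h (Or.inl ⟨hpart, hclass, hdole⟩)

theorem part_eq_of_not_adj (h : ¬(almostMultipartite ℓ k m).Adj p q) (hclass : p.1 = q.1) :
    p.2.2 = q.2.2 := by
  by_contra hpart
  exact h (Or.inr ⟨hclass, hpart⟩)

end almostMultipartite

namespace SimpleGraph

variable {V W : Type*} {F : SimpleGraph V} {G : SimpleGraph W}

theorem Embedding.not_adj_of_not_reachable (f : F ↪g G) {v w a b : V} (hvw : ¬F.Reachable v w)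
    (ha : F.Reachable v a) (hb : F.Reachable w b) : ¬G.Adj (f a) (f b) := fun hab =>
  hvw (ha.trans ((f.map_adj_iff.1 hab).reachable.trans hb.symm))

theorem completeMultipartiteGraph.exists_adj_ne_or_adj_adj_ne {ι : Type*} {V : ι → Type*}
    [Nontrivial ι] [∀ i, Nonempty (V i)] (i₀ : ι) [Nontrivial (V i₀)] (v : Σ i, V i) :
    (∃ u u', (completeMultipartiteGraph V).Adj v u ∧ (completeMultipartiteGraph V).Adj v u' ∧
        u ≠ u') ∨
      ∃ u x, (completeMultipartiteGraph V).Adj v u ∧ (completeMultipartiteGraph V).Adj u x ∧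
        x ≠ v := by
  obtain ⟨a, b, hab⟩ := exists_pair_ne (V i₀)
  have hab' : (⟨i₀, a⟩ : Σ i, V i) ≠ ⟨i₀, b⟩ := fun h => hab (sigma_mk_injective h)
  by_cases hv : v.1 = i₀
  · obtain ⟨j, hj⟩ := exists_ne v.1
    let u : Σ i, V i := ⟨j, Classical.arbitrary (V j)⟩
    have hvu : (completeMultipartiteGraph V).Adj v u := hj.symm
    have hu : ∀ y : V i₀, (completeMultipartiteGraph V).Adj u ⟨i₀, y⟩ := fun _ => hv ▸ hj
    right
    by_cases ha : (⟨i₀, a⟩ : Σ i, V i) = v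
    · exact ⟨u, ⟨i₀, b⟩, hvu, hu b, ha ▸ hab'.symm⟩
    · exact ⟨u, ⟨i₀, a⟩, hvu, hu a, ha⟩
  · exact Or.inl ⟨⟨i₀, a⟩, ⟨i₀, b⟩, hv, hv, hab'⟩

end SimpleGraph

theorem manyCopies.exists_adj_ne_or_adj_adj_ne {α : Type*} {A : SimpleGraph α} {m : ℕ}
    {v : Fin m × α}
    (h : (∃ u u', A.Adj v.2 u ∧ A.Adj v.2 u' ∧ u ≠ u') ∨ ∃ u x, A.Adj v.2 u ∧ A.Adj u x ∧ x ≠ v.2) :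
    (∃ u u', (manyCopies m A).Adj v u ∧ (manyCopies m A).Adj v u' ∧ u ≠ u') ∨
      ∃ u x, (manyCopies m A).Adj v u ∧ (manyCopies m A).Adj u x ∧ x ≠ v := by
  rcases h with ⟨u, u', hu, hu', hne⟩ | ⟨u, x, hu, hx, hne⟩
  · exact Or.inl ⟨(v.1, u), (v.1, u'), ⟨rfl, hu⟩, ⟨rfl, hu'⟩, fun h => hne (congrArg Prod.snd h)⟩
  · exact Or.inr ⟨(v.1, u), (v.1, x), ⟨rfl, hu⟩, ⟨rfl, hx⟩, fun h => hne (congrArg Prod.snd h)⟩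

section CrossingPair

open almostMultipartite

variable {V : Type*} {F : SimpleGraph V} {ℓ k m : ℕ} (f : F ↪g almostMultipartite ℓ k m)
  {v w : V}

theorem class_eq_of_crossing (hvw : ¬F.Reachable v w) (hpart : (f v).2.2 = (f w).2.2)
    (hdole : (f v).2.1 ≠ (f w).2.1) : (f v).1 = (f w).1 :=
  class_eq_of_not_adj (f.not_adj_of_not_reachable hvw .rfl .rfl) hpart hdole

theorem map_adj_of_crossing (hvw : ¬F.Reachable v w) (hpart : (f v).2.2 = (f w).2.2)
    (hdole : (f v).2.1 ≠ (f w).2.1) {u : V} (hu : F.Adj v u) :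
    (f u).1 ≠ (f v).1 ∧ (f u).2.1 = (f w).2.1 ∧ (f u).2.2 = (f v).2.2 := by
  have hclass := class_eq_of_crossing f hvw hpart hdole
  have huw := f.not_adj_of_not_reachable hvw hu.reachable .rfl
  rcases f.map_adj_iff.2 hu.symm with ⟨hp, hc, -⟩ | ⟨hc, hp⟩
  · exact ⟨hc, dole_eq_of_not_adj huw (hp.trans hpart) (hclass ▸ hc), hp⟩
  · exact absurd (part_eq_of_not_adj huw (hc.trans hclass)) (hpart ▸ hp)

theorem map_eq_of_crossing (hvw : ¬F.Reachable v w) (hpart : (f v).2.2 = (f w).2.2)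
    (hdole : (f v).2.1 ≠ (f w).2.1) {u u' : V} (hu : F.Adj v u) (hu' : F.Adj w u') :
    f u = ((f u').1, (f w).2.1, (f v).2.2) := by
  obtain ⟨-, hdu, hpu⟩ := map_adj_of_crossing f hvw hpart hdole hu
  obtain ⟨-, hdu', hpu'⟩ :=
    map_adj_of_crossing f (fun h => hvw h.symm) hpart.symm (Ne.symm hdole) hu'
  have hclass : (f u).1 = (f u').1 :=
    class_eq_of_not_adj (f.not_adj_of_not_reachable hvw hu.reachable hu'.reachable)
      (hpu.trans (hpart.trans hpu'.symm)) (by rw [hdu, hdu']; exact Ne.symm hdole)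
  exact Prod.ext hclass (Prod.ext hdu hpu)

theorem eq_of_adj_of_crossing (hvw : ¬F.Reachable v w) (hpart : (f v).2.2 = (f w).2.2)
    (hdole : (f v).2.1 ≠ (f w).2.1) (hw : ∃ u', F.Adj w u') {u₁ u₂ : V} (hu₁ : F.Adj v u₁)
    (hu₂ : F.Adj v u₂) : u₁ = u₂ := by
  obtain ⟨u', hu'⟩ := hw
  exact f.injective ((map_eq_of_crossing f hvw hpart hdole hu₁ hu').trans
    (map_eq_of_crossing f hvw hpart hdole hu₂ hu').symm)

theorem eq_of_adj_adj_of_crossing (hvw : ¬F.Reachable v w) (hpart : (f v).2.2 = (f w).2.2)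
    (hdole : (f v).2.1 ≠ (f w).2.1) (hw : ∃ u', F.Adj w u') {u x : V} (hu : F.Adj v u)
    (hx : F.Adj u x) : x = v := by
  obtain ⟨u', hu'⟩ := hw
  have hfu := map_eq_of_crossing f hvw hpart hdole hu hu'
  have hclass := class_eq_of_crossing f hvw hpart hdole
  have hxv : F.Reachable v x := hu.reachable.trans hx.reachable
  have hxw := f.not_adj_of_not_reachable hvw hxv .rfl
  have hxu' := f.not_adj_of_not_reachable hvw hxv hu'.reachable
  obtain ⟨hcu', hdu', hpu'⟩ :=
    map_adj_of_crossing f (fun h => hvw h.symm) hpart.symm (Ne.symm hdole) hu'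
  have hux := f.map_adj_iff.2 hx
  rw [hfu] at hux
  rcases hux with ⟨hp, hc, hd⟩ | ⟨hc, hp⟩
  · have hxc : (f x).1 = (f w).1 :=
      class_eq_of_not_adj hxw (hp.symm.trans hpart) (fun h => hd h.symm)
    have hxd : (f x).2.1 = (f u').2.1 :=
      dole_eq_of_not_adj hxu' (hp.symm.trans (hpart.trans hpu'.symm))
        (fun h => hcu' (h.symm.trans hxc))
    exact f.injective (Prod.ext (hxc.trans hclass.symm) (Prod.ext (hxd.trans hdu') hp.symm))
  · exact absurd (Or.inr ⟨hc.symm, by rw [hpu', ← hpart]; exact fun h => hp h.symm⟩) hxu'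

end CrossingPair

/-- with `k ≥ 2`, `n_k > 1`, `F = mK_{n₁,…,n_k}` and `G' = G^m_{ℓ−1,k}`
(`ℓ = m(n₁+…+n_k)`), for every realization of `F` as an induced subgraph of `G'`
there is no pair of vertices of `F` from different connected components whose images
lie in the same part of `G'` but in different doles of `G'`. -/
theorem no_crossing_pair (k m : ℕ) (hk : 2 ≤ k)
    (n : Fin k → ℕ) (hpos : ∀ i, 0 < n i)
    (hnk : 1 < n ⟨k - 1, by omega⟩)
    (f : (manyCopies m (SimpleGraph.completeMultipartiteGraph fun i => Fin (n i))) ↪g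
        almostMultipartite (m * ∑ i, n i - 1) k m) :
    ¬∃ v w : Fin m × Σ i : Fin k, Fin (n i),
        (manyCopies m
            (SimpleGraph.completeMultipartiteGraph fun i => Fin (n i))).connectedComponentMk v ≠
          (manyCopies m
            (SimpleGraph.completeMultipartiteGraph fun i => Fin (n i))).connectedComponentMk w ∧
        (f v).2.2 = (f w).2.2 ∧ (f v).2.1 ≠ (f w).2.1 := by
  rintro ⟨v, w, hcomp, hpart, hdole⟩
  have hvw := fun h => hcomp (SimpleGraph.ConnectedComponent.sound h)
  have : Nontrivial (Fin k) := Fin.nontrivial_iff_two_le.2 hk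
  have : ∀ i, Nonempty (Fin (n i)) := fun i => Fin.pos_iff_nonempty.1 (hpos i)
  obtain ⟨L, hL⟩ : ∃ L, 1 < n L := ⟨_, hnk⟩
  have : Nontrivial (Fin (n L)) := Fin.nontrivial_iff_two_le.2 hL
  have hpath (x : Fin m × Σ i : Fin k, Fin (n i)) :=
    manyCopies.exists_adj_ne_or_adj_adj_ne (v := x)
      (SimpleGraph.completeMultipartiteGraph.exists_adj_ne_or_adj_adj_ne L x.2)
  have hw : ∃ u', _ :=
    (hpath w).elim (fun ⟨u', _, hu', _⟩ => ⟨u', hu'⟩) fun ⟨u', _, hu', _⟩ => ⟨u', hu'⟩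
  rcases hpath v with ⟨u₁, u₂, hu₁, hu₂, hne⟩ | ⟨u, x, hu, hx, hne⟩
  · exact hne (eq_of_adj_of_crossing f hvw hpart hdole hw hu₁ hu₂)
  · exact hne (eq_of_adj_adj_of_crossing f hvw hpart hdole hw hu hx)
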